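/- arXiv:2502.10204 — 5 statements merged into one kernel-verified Lean document; each statement's English description precedes it below -/
import Mathlib

section
/- Let A ⊆ ℝ^d (d ≥ 1) be a non-meager Baire set, and let F = {v_i}_{i ∈ ℕ} be a bounded sequence in ℝ^d (i.e., sup_i ‖v_i‖ < ∞). Then the set Δ_F(A) = {t ∈ ℝ : ∃ z ∈ ℝ^d such that t·v_i + z ∈ A for all i ∈ ℕ} has nonempty interior in ℝ. -/
open Set Metric

/-!
Let `U` be an open set with `A Δ U` meagre; as `A` is not meagre, `U` contains a ball `B(x, r)`,
and `U \ A` is meagre. If `|t| C < r`, where `C` bounds the `‖v i‖`, then every translate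
`t • v i + B(x, r - |t| C)` lies in `U`. Countably many translates of the meagre set `U \ A`
cannot cover the nonempty open ball `B(x, r - |t| C)`, and any `z` in the ball outside all of
them satisfies `t • v i + z ∈ A` for all `i`. So `Δ_F(A)` contains the open neighbourhood
`{t | |t| C < r}` of `0`.
-/

theorem nonempty_of_isMeagre_symmDiff {X : Type*} [TopologicalSpace X] {A U : Set X}
    (hA : ¬ IsMeagre A) (hAU : IsMeagre (symmDiff A U)) : U.Nonempty := by
  rw [nonempty_iff_ne_empty]
  rintro rfl
  exact hA (by rwa [← bot_eq_empty, symmDiff_bot] at hAU)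

theorem IsMeagre.exists_mem_forall_add_notMem {G ι : Type*} [TopologicalSpace G] [AddGroup G]
    [IsTopologicalAddGroup G] [BaireSpace G] [Countable ι] {P V : Set G} (hP : IsMeagre P)
    (hV : IsOpen V) (hVne : V.Nonempty) (w : ι → G) : ∃ z ∈ V, ∀ i, w i + z ∉ P := by
  have hbad : IsMeagre (⋃ i, (w i + ·) ⁻¹' P) := isMeagre_iUnion fun i =>
    hP.preimage_of_isOpenMap (continuous_const_add (w i)) (Homeomorph.addLeft (w i)).isOpenMap
  obtain ⟨z, hzV, hz⟩ := not_subset.mp fun h => not_isMeagre_of_isOpen hV hVne (hbad.mono h)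
  exact ⟨z, hzV, fun i hi => hz (mem_iUnion_of_mem i hi)⟩

theorem exists_forall_add_mem_of_isMeagre_diff {G ι : Type*} [SeminormedAddCommGroup G]
    [BaireSpace G] [Countable ι] {A U : Set G} (hUA : IsMeagre (U \ A)) {x : G} {r δ : ℝ}
    (hball : ball x r ⊆ U) {w : ι → G} (hw : ∀ i, ‖w i‖ ≤ δ) (hδ : δ < r) :
    ∃ z, ∀ i, w i + z ∈ A := by
  obtain ⟨z, hz, hzA⟩ := hUA.exists_mem_forall_add_notMem isOpen_ball
    (nonempty_ball.mpr (sub_pos.mpr hδ)) w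
  refine ⟨z, fun i => ?_⟩
  have hU : w i + z ∈ U := hball <| calc
    dist (w i + z) x ≤ ‖w i‖ + dist z x := by
      rw [dist_eq_norm, dist_eq_norm, add_sub_assoc]; exact norm_add_le _ _
    _ < δ + (r - δ) := add_lt_add_of_le_of_lt (hw i) (mem_ball.mp hz)
    _ = r := add_sub_cancel _ _
  by_contra hA
  exact hzA i ⟨hU, hA⟩

theorem deltaF_nonempty_interior_euclidean_general
    (d : ℕ) (A : Set (EuclideanSpace ℝ (Fin d)))
    (hA_nonmeager : ¬ IsMeagre A)
    (hA_baire : ∃ U : Set (EuclideanSpace ℝ (Fin d)), IsOpen U ∧ IsMeagre (symmDiff A U))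
    (v : ℕ → EuclideanSpace ℝ (Fin d))
    (hv : ∃ C : ℝ, ∀ i, ‖v i‖ ≤ C) :
    (interior {t : ℝ | ∃ z : EuclideanSpace ℝ (Fin d), ∀ i : ℕ, t • v i + z ∈ A}).Nonempty := by
  obtain ⟨U, hU, hAU⟩ := hA_baire
  obtain ⟨C, hC⟩ := hv
  obtain ⟨x, hx⟩ := nonempty_of_isMeagre_symmDiff hA_nonmeager hAU
  obtain ⟨r, hr, hball⟩ := isOpen_iff.mp hU x hx
  have hUA : IsMeagre (U \ A) := hAU.mono subset_union_right
  have hopen : IsOpen {t : ℝ | |t| * C < r} := isOpen_lt (by fun_prop) continuous_const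
  refine ⟨0, mem_interior.mpr ⟨_, fun t ht => ?_, hopen, by simpa using hr⟩⟩
  refine exists_forall_add_mem_of_isMeagre_diff hUA hball (fun i => ?_) ht
  rw [norm_smul, Real.norm_eq_abs]
  exact mul_le_mul_of_nonneg_left (hC i) (abs_nonneg t)

/-- If `A ⊆ ℝ^d` (`d ≥ 1`) is a non-meager set with the Baire property and
`F = {v i}_{i ∈ ℕ}` is a bounded sequence in `ℝ^d`, then
`Δ_F(A) = {t : ∃ z, ∀ i, t • v i + z ∈ A}` has nonempty interior in `ℝ`. -/
theorem deltaF_nonempty_interior_euclidean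
    (d : ℕ) (hd : 1 ≤ d) (A : Set (EuclideanSpace ℝ (Fin d)))
    (hA_nonmeager : ¬ IsMeagre A)
    (hA_baire : ∃ U : Set (EuclideanSpace ℝ (Fin d)), IsOpen U ∧ IsMeagre (symmDiff A U))
    (v : ℕ → EuclideanSpace ℝ (Fin d))
    (hv : ∃ C : ℝ, ∀ i, ‖v i‖ ≤ C) :
    (interior {t : ℝ | ∃ z : EuclideanSpace ℝ (Fin d), ∀ i : ℕ, t • v i + z ∈ A}).Nonempty :=
  deltaF_nonempty_interior_euclidean_general d A hA_nonmeager hA_baire v hv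
end

section
/- Let X be a topological vector space over ℝ. If A, B ⊆ X are non-meager Baire sets, then both A + B = {a + b : a ∈ A, b ∈ B} and A − B = {a − b : a ∈ A, b ∈ B} contain nonempty open subsets of X. -/
/-!
In a topological vector space a nonempty open meagre set would make the whole space
meagre: translated to a neighbourhood `W` of `0` it is absorbent, so the countably many
dilates `c ^ n • W` cover the space. Hence, as soon as `A` is non-meagre, no nonempty open set
is meagre.

Write `A`, `B` as open sets `U`, `V` up to meagre sets (non-meagreness makes `U`, `V`
nonempty). For `x = u + v` the open set `U ∩ (x - V)` contains `u`, so it is not meagre and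
has a point `a = x - b` outside the meagre sets `U \ A` and `x - (V \ B)`; then
`x = a + b ∈ A + B`. Thus `U + V ⊆ A + B`, and `U - V ⊆ A - B` is the case of `-V`, `-B`.
-/

open Set Pointwise Filter Topology

theorem IsMeagre.image_homeomorph {X Y : Type*} [TopologicalSpace X] [TopologicalSpace Y]
    (f : X ≃ₜ Y) {s : Set X} (hs : IsMeagre s) : IsMeagre (f '' s) := by
  rw [f.image_eq_preimage_symm]
  exact hs.preimage_of_isOpenMap f.symm.continuous f.symm.isOpenMap

theorem IsMeagre.neg {G : Type*} [TopologicalSpace G] [AddGroup G] [IsTopologicalAddGroup G]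
    {s : Set G} (hs : IsMeagre s) : IsMeagre (-s) :=
  hs.preimage_of_isOpenMap continuous_neg (Homeomorph.neg G).isOpenMap

theorem not_isMeagre_of_isMeagre_symmDiff {X : Type*} [TopologicalSpace X] {s t : Set X}
    (hs : ¬IsMeagre s) (hst : IsMeagre (symmDiff s t)) : ¬IsMeagre t := fun ht ↦
  hs <| (hst.union ht).mono fun x hx ↦ by by_cases hxt : x ∈ t <;> simp [mem_symmDiff, *]

section TopologicalVectorSpace

variable {E : Type*} [AddCommGroup E] [TopologicalSpace E]

theorem isMeagre_univ_of_isMeagre_nhds_zero (𝕜 : Type*) [NontriviallyNormedField 𝕜]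
    [Module 𝕜 E] [ContinuousSMul 𝕜 E] {W : Set E} (hW : W ∈ 𝓝 0) (hm : IsMeagre W) :
    IsMeagre (univ : Set E) := by
  obtain ⟨c, hc⟩ := NormedField.exists_one_lt_norm 𝕜
  have hc0 : c ≠ 0 := norm_pos_iff.mp (one_pos.trans hc)
  have hpow : Tendsto (c ^ ·) atTop (Bornology.cobounded 𝕜) := by
    rw [← tendsto_norm_atTop_iff_cobounded]
    simpa only [norm_pow] using tendsto_pow_atTop_atTop_of_one_lt hc
  have hcover : univ ⊆ ⋃ n : ℕ, c ^ n • W := fun x _ ↦ by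
    obtain ⟨n, hn⟩ := (hpow.eventually ((absorbent_nhds_zero (𝕜 := 𝕜) hW) x)).exists
    exact mem_iUnion.2 ⟨n, singleton_subset_iff.1 hn⟩
  refine (isMeagre_iUnion fun n ↦ ?_).mono hcover
  exact hm.image_homeomorph (Homeomorph.smulOfNeZero _ (pow_ne_zero n hc0))

theorem isMeagre_univ_of_isMeagre_of_isOpen (𝕜 : Type*) [NontriviallyNormedField 𝕜]
    [Module 𝕜 E] [ContinuousSMul 𝕜 E] [IsTopologicalAddGroup E] {U : Set E} (hU : IsOpen U)
    (hne : U.Nonempty) (hm : IsMeagre U) : IsMeagre (univ : Set E) := by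
  obtain ⟨x, hx⟩ := hne
  let τ := Homeomorph.addLeft x
  refine isMeagre_univ_of_isMeagre_nhds_zero 𝕜 (W := τ ⁻¹' U) ?_ ?_
  · exact (hU.preimage τ.continuous).mem_nhds (by simpa [τ] using hx)
  · exact hm.preimage_of_isOpenMap τ.continuous τ.isOpenMap

end TopologicalVectorSpace

section TopologicalAddGroup

variable {G : Type*} [AddGroup G] [TopologicalSpace G] [IsTopologicalAddGroup G]
  {A B U V : Set G}

theorem add_subset_add_of_isMeagre_diff
    (hG : ∀ O : Set G, IsOpen O → O.Nonempty → ¬IsMeagre O)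
    (hU : IsOpen U) (hV : IsOpen V) (hUA : IsMeagre (U \ A)) (hVB : IsMeagre (V \ B)) :
    U + V ⊆ A + B := by
  rintro x ⟨u, hu, v, hv, rfl⟩
  let σ := Homeomorph.subLeft (u + v)
  have hO : ¬IsMeagre (U ∩ σ '' V) :=
    hG _ (hU.inter (σ.isOpenMap V hV)) ⟨u, hu, v, hv, by simp [σ]⟩
  obtain ⟨a, ⟨haU, b, hbV, rfl⟩, hbad⟩ :=
    not_subset.1 fun h ↦ hO ((hUA.union (hVB.image_homeomorph σ)).mono h)
  have hb : b ∈ B := by_contra fun hb ↦ hbad (.inr ⟨b, ⟨hbV, hb⟩, rfl⟩)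
  have ha : σ b ∈ A := by_contra fun ha ↦ hbad (.inl ⟨haU, ha⟩)
  simpa [σ] using add_mem_add ha hb

theorem sub_subset_sub_of_isMeagre_diff
    (hG : ∀ O : Set G, IsOpen O → O.Nonempty → ¬IsMeagre O)
    (hU : IsOpen U) (hV : IsOpen V) (hUA : IsMeagre (U \ A)) (hVB : IsMeagre (V \ B)) :
    U - V ⊆ A - B := by
  rw [sub_eq_add_neg, sub_eq_add_neg]
  exact add_subset_add_of_isMeagre_diff (B := -B) hG hU hV.neg hUA hVB.neg

end TopologicalAddGroup

/-- Piccard's theorem in a topological vector space: if `A, B ⊆ X` are non-meager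
sets with the Baire property, then both `A + B` and `A - B` contain nonempty open sets. -/
theorem piccard_tvs
    (X : Type*) [AddCommGroup X] [Module ℝ X] [TopologicalSpace X]
    [IsTopologicalAddGroup X] [ContinuousSMul ℝ X]
    (A B : Set X)
    (hA_nonmeager : ¬ IsMeagre A)
    (hA_baire : ∃ U : Set X, IsOpen U ∧ IsMeagre (symmDiff A U))
    (hB_nonmeager : ¬ IsMeagre B)
    (hB_baire : ∃ U : Set X, IsOpen U ∧ IsMeagre (symmDiff B U)) :
    (∃ O : Set X, IsOpen O ∧ O.Nonempty ∧ O ⊆ A + B) ∧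
      (∃ O : Set X, IsOpen O ∧ O.Nonempty ∧ O ⊆ A - B) := by
  obtain ⟨U, hU, hAU⟩ := hA_baire
  obtain ⟨V, hV, hBV⟩ := hB_baire
  have hX : ∀ O : Set X, IsOpen O → O.Nonempty → ¬IsMeagre O := fun O hO hne hm ↦
    hA_nonmeager ((isMeagre_univ_of_isMeagre_of_isOpen ℝ hO hne hm).mono (subset_univ A))
  have hUne : U.Nonempty :=
    nonempty_of_not_isMeagre (not_isMeagre_of_isMeagre_symmDiff hA_nonmeager hAU)
  have hVne : V.Nonempty :=
    nonempty_of_not_isMeagre (not_isMeagre_of_isMeagre_symmDiff hB_nonmeager hBV)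
  have hUA : IsMeagre (U \ A) := hAU.mono subset_union_right
  have hVB : IsMeagre (V \ B) := hBV.mono subset_union_right
  exact ⟨⟨U + V, hV.add_left, hUne.add hVne,
      add_subset_add_of_isMeagre_diff hX hU hV hUA hVB⟩,
    ⟨U - V, hV.sub_left, hUne.sub hVne, sub_subset_sub_of_isMeagre_diff hX hU hV hUA hVB⟩⟩
end

section
/- Let V be a topological vector space over ℝ, and let F = {v_n}_{n ∈ ℕ} ⊆ V be a bounded sequence. If A ⊆ V is a non-meager Baire set, then the set Δ_F(A) = {t ∈ ℝ : ∃ z ∈ V such that t·v_n + z ∈ A for all n ∈ ℕ} has nonempty interior in ℝ. -/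
/-!
`A` differs from an open set `U` by a meagre set, so `U` is non-meagre, hence nonempty, and
`U \ A` is meagre. Pick `u ∈ U` and a balanced neighbourhood `N` of `0` with `u + N + N ⊆ U`.
Boundedness of `F` puts a translate `s • F + w` inside `N`, and balancedness then puts
`t • F + (t / s) • w` inside `N` for every `|t| < s`. Since `V` is non-meagre, so is every
nonempty open subset of it, and `interior N` is not covered by the countably many meagre
translates of `U \ A` that would spoil the points `u + t • v n + (t / s) • w + y`. A point `y`
outside them gives a translate of `t • F` inside `A`, so `(-s, s) ⊆ Δ_F(A)`.
-/

open Set Filter Topology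

theorem IsMeagre.preimage_homeomorph {X Y : Type*} [TopologicalSpace X] [TopologicalSpace Y]
    (h : X ≃ₜ Y) {s : Set Y} (hs : IsMeagre s) : IsMeagre (h ⁻¹' s) :=
  hs.preimage_of_isOpenMap h.continuous h.isOpenMap

section TopologicalAddGroup

variable {G : Type*} [AddGroup G] [TopologicalSpace G] [IsTopologicalAddGroup G]

theorem exists_mem_forall_add_mem_of_isMeagre_diff {ι : Type*} [Countable ι] {U A W : Set G}
    (hUA : IsMeagre (U \ A)) (hW : ¬ IsMeagre W) (x : ι → G) (hxW : ∀ i, ∀ y ∈ W, x i + y ∈ U) :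
    ∃ y ∈ W, ∀ i, x i + y ∈ A := by
  have hbad : IsMeagre (⋃ i, (x i + ·) ⁻¹' (U \ A)) :=
    isMeagre_iUnion fun i => hUA.preimage_homeomorph (Homeomorph.addLeft (x i))
  obtain ⟨y, hyW, hy⟩ := not_subset.1 fun hsub => hW (hbad.mono hsub)
  refine ⟨y, hyW, fun i => ?_⟩
  by_contra hyA
  exact hy (mem_iUnion.2 ⟨i, hxW i y hyW, hyA⟩)

end TopologicalAddGroup

section RealTVS

variable {V : Type*} [AddCommGroup V] [Module ℝ V] [TopologicalSpace V]
  [IsTopologicalAddGroup V] [ContinuousSMul ℝ V]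

theorem not_isMeagre_of_isOpen_of_not_isMeagre_univ (hV : ¬ IsMeagre (univ : Set V))
    {W : Set V} (hW : IsOpen W) (hne : W.Nonempty) : ¬ IsMeagre W := by
  obtain ⟨w, hw⟩ := hne
  intro hWm
  have hcover : ⋃ n : ℕ, (fun x : V => ((n : ℝ) + 1)⁻¹ • x + w) ⁻¹' W = univ := by
    refine eq_univ_of_forall fun x => mem_iUnion.2 ?_
    have hlim : Tendsto (fun n : ℕ => ((n : ℝ) + 1)⁻¹ • x + w) atTop (𝓝 w) := by
      simpa using
        ((tendsto_one_div_add_atTop_nhds_zero_nat (𝕜 := ℝ)).smul_const x).add_const w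
    exact (hlim.eventually_mem (hW.mem_nhds hw)).exists
  refine hV (hcover ▸ isMeagre_iUnion fun n => ?_)
  have hn : ((n : ℝ) + 1)⁻¹ ≠ 0 := by positivity
  exact hWm.preimage_homeomorph ((Homeomorph.smulOfNeZero _ hn).trans (Homeomorph.addRight w))

end RealTVS

theorem exists_balanced_nhds_zero_add_subset {𝕜 E : Type*} [NormedField 𝕜]
    [NeBot (𝓝[≠] (0 : 𝕜))] [AddCommGroup E] [Module 𝕜 E] [TopologicalSpace E]
    [IsTopologicalAddGroup E] [ContinuousSMul 𝕜 E] {S : Set E} (hS : S ∈ 𝓝 0) :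
    ∃ N ∈ 𝓝 (0 : E), Balanced 𝕜 N ∧ ∀ a ∈ N, ∀ b ∈ N, a + b ∈ S := by
  obtain ⟨M, hM, hMS⟩ := exists_nhds_zero_half hS
  exact ⟨balancedCore 𝕜 M, balancedCore_mem_nhds_zero hM, balancedCore_balanced M,
    fun a ha b hb => hMS a (balancedCore_subset M ha) b (balancedCore_subset M hb)⟩

/-- Main theorem in topological vector spaces: if `F = {v n}` is a bounded sequence
in a topological vector space `V` and `A ⊆ V` is a non-meager set with the Baire
property, then `Δ_F(A) = {t : ∃ z, ∀ n, t • v n + z ∈ A}` has nonempty interior. -/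
theorem deltaF_nonempty_interior_tvs
    (V : Type*) [AddCommGroup V] [Module ℝ V] [TopologicalSpace V]
    [IsTopologicalAddGroup V] [ContinuousSMul ℝ V]
    (v : ℕ → V)
    (hv_bounded : ∀ W : Set V, IsOpen W → W.Nonempty →
      ∃ t : ℝ, 0 < t ∧ ∃ z : V, ∀ n : ℕ, t • v n + z ∈ W)
    (A : Set V)
    (hA_nonmeager : ¬ IsMeagre A)
    (hA_baire : ∃ U : Set V, IsOpen U ∧ IsMeagre (symmDiff A U)) :
    (interior {t : ℝ | ∃ z : V, ∀ n : ℕ, t • v n + z ∈ A}).Nonempty := by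
  obtain ⟨U, hU, hAU⟩ := hA_baire
  have hUA : IsMeagre (U \ A) := hAU.mono subset_union_right
  have hU_nonmeager : ¬ IsMeagre U := fun hUm =>
    hA_nonmeager ((hAU.union hUm).mono fun x hx =>
      (em (x ∈ U)).elim Or.inr fun hxU => Or.inl (Or.inl ⟨hx, hxU⟩))
  obtain ⟨u, hu⟩ := nonempty_of_not_isMeagre hU_nonmeager
  obtain ⟨N, hN, hN_bal, hN_add⟩ := exists_balanced_nhds_zero_add_subset (𝕜 := ℝ)
    ((hU.preimage (continuous_const_add u)).mem_nhds (show u + 0 ∈ U by simpa))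
  have hN_int : (interior N).Nonempty := ⟨0, mem_interior_iff_mem_nhds.2 hN⟩
  obtain ⟨s, hs, w, hw⟩ := hv_bounded (interior N) isOpen_interior hN_int
  have hN_nonmeager := not_isMeagre_of_isOpen_of_not_isMeagre_univ
    (fun h => hA_nonmeager (h.mono (subset_univ A))) isOpen_interior hN_int
  refine ⟨0, mem_interior_iff_mem_nhds.2 (mem_of_superset (Ioo_mem_nhds (neg_lt_zero.2 hs) hs)
    fun t ht => ?_)⟩
  have hts : ‖t / s‖ ≤ 1 := by
    rw [Real.norm_eq_abs, abs_div, abs_of_pos hs, div_le_one hs]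
    exact (abs_lt.2 ht).le
  obtain ⟨y, -, hyA⟩ := exists_mem_forall_add_mem_of_isMeagre_diff hUA hN_nonmeager
    (fun n => u + (t / s) • (s • v n + w)) fun n y hy =>
      by simpa [add_assoc] using
        hN_add _ (hN_bal.smul_mem hts (interior_subset (hw n))) y (interior_subset hy)
  refine ⟨u + (t / s) • w + y, fun n => ?_⟩
  convert hyA n using 1
  rw [smul_add, smul_smul, div_mul_cancel₀ t hs.ne']
  abel
end

section
/- Let A ⊆ ℝ be a set that contains at least one representative of every coset of ℚ in ℝ; that is, for every x ∈ ℝ there exists a ∈ A with x − a ∈ ℚ. Then A is non-meager. -/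
open Set

/-- A set `A ⊆ ℝ` containing at least one representative of every coset of `ℚ`
in `ℝ` is non-meager. -/
theorem nonmeagre_of_full_transversal
    (A : Set ℝ) (hA : ∀ x : ℝ, ∃ a ∈ A, ∃ q : ℚ, x - a = (q : ℝ)) :
    ¬ IsMeagre A := by
  intro hM
  have key : ∀ q : ℚ, {x : ℝ | x - (q : ℝ) ∈ A}ᶜ ∈ residual ℝ := by
    intro q
    have h : (Homeomorph.addRight (-(q : ℝ))) ⁻¹' Aᶜ ∈ residual ℝ := by
      have hmap := (Homeomorph.addRight (-(q : ℝ))).residual_map_eq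
      have hM' : Aᶜ ∈ residual ℝ := hM
      rw [← hmap] at hM'
      exact Filter.mem_map.mp hM'
    have : (Homeomorph.addRight (-(q : ℝ))) ⁻¹' Aᶜ = {x : ℝ | x - (q : ℝ) ∈ A}ᶜ := by
      ext x
      simp [sub_eq_add_neg]
    rwa [this] at h
  have hInt : (⋂ q : ℚ, {x : ℝ | x - (q : ℝ) ∈ A}ᶜ) ∈ residual ℝ :=
    countable_iInter_mem.mpr key
  have hEmpty : (⋂ q : ℚ, {x : ℝ | x - (q : ℝ) ∈ A}ᶜ) = ∅ := by
    ext x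
    simp only [mem_iInter, mem_compl_iff, mem_setOf_eq, mem_empty_iff_false, iff_false, not_forall,
      not_not]
    obtain ⟨a, ha, q, hq⟩ := hA x
    exact ⟨q, by rw [show x - (q : ℝ) = a by linarith]; exact ha⟩
  rw [hEmpty] at hInt
  have := dense_of_mem_residual hInt
  simpa using this.nonempty
end

section
/- Let A ⊆ ℝ^d be a Lebesgue measurable set of positive measure and let F = {v¹, …, v^k} ⊆ ℝ^d be a finite set. Then there exists ε > 0 such that the open interval (0, ε) is contained in Δ_F(A) = {t ∈ ℝ : ∃ z ∈ ℝ^d such that t·vⁱ + z ∈ A for all i = 1, …, k}; that is, A contains all sufficiently small scaled translates of F. -/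
/-!
Translation is continuous in measure: for `s` of finite positive measure, `μ ((s - x) ∆ s) → 0`
as `x → 0`. Hence for translations `w i` close enough to `0` the sets `s \ (s - w i)` have total
measure less than `μ s`, so some `z ∈ s` satisfies `z + w i ∈ s` for all `i`. Taking
`w i = t • v i` with `t` small gives the configuration; a set of infinite measure is first
replaced by a subset of finite positive measure.
-/

open Set MeasureTheory Filter
open scoped ENNReal symmDiff Topology

namespace MeasureTheory

theorem nonempty_inter_iInter_of_sum_measure_sdiff_lt {α ι : Type*} [MeasurableSpace α]
    [Fintype ι] {μ : Measure α} {s : Set α} {t : ι → Set α}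
    (h : ∑ i, μ (s \ t i) < μ s) : (s ∩ ⋂ i, t i).Nonempty := by
  by_contra hempty
  rw [not_nonempty_iff_eq_empty] at hempty
  refine h.not_ge ?_
  calc μ s ≤ μ (s ∩ ⋂ i, t i) + μ (s \ ⋂ i, t i) := measure_le_inter_add_sdiff μ s _
    _ = μ (⋃ i, s \ t i) := by rw [hempty, measure_empty, zero_add, sdiff_iInter]
    _ ≤ ∑ i, μ (s \ t i) := measure_iUnion_fintype_le μ _

section AddGroup

variable {G : Type*} [AddGroup G] [TopologicalSpace G] [IsTopologicalAddGroup G]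
  [MeasurableSpace G] [BorelSpace G] {μ : Measure G} [μ.IsAddRightInvariant]

theorem tendsto_measure_symmDiff_preimage_add_right_nhds_zero
    [μ.InnerRegularCompactLTTop] [IsLocallyFiniteMeasure μ] {s : Set G}
    (hs : NullMeasurableSet s μ) (hμs : μ s ≠ ∞) :
    Tendsto (fun x : G ↦ μ (((· + x) ⁻¹' s) ∆ s)) (𝓝 0) (𝓝 0) := by
  let translate : C(G, C(G, G)) := ContinuousMap.curry ⟨fun p : G × G ↦ p.2 + p.1, by fun_prop⟩
  have hpreserving (x : G) : MeasurePreserving (translate x) μ μ :=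
    measurePreserving_add_right μ x
  have hcoe (x : G) : ⇑(translate x) = (· + x) := rfl
  simpa only [hcoe, add_zero, preimage_id'] using tendsto_measure_symmDiff_preimage_nhds_zero
    (translate.continuous.tendsto 0) (.of_forall hpreserving) (hpreserving 0) hs hμs

theorem eventually_nhds_zero_exists_forall_add_mem_of_measure_ne_top
    [μ.InnerRegularCompactLTTop] [IsLocallyFiniteMeasure μ] {ι : Type*} [Fintype ι]
    {s : Set G} (hs : NullMeasurableSet s μ) (hμs : μ s ≠ ∞) (hpos : 0 < μ s) :
    ∀ᶠ w in 𝓝 (0 : ι → G), ∃ z ∈ s, ∀ i, z + w i ∈ s := by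
  have hsum : Tendsto (fun w : ι → G ↦ ∑ i, μ (((· + w i) ⁻¹' s) ∆ s)) (𝓝 0) (𝓝 0) := by
    simpa using tendsto_finsetSum Finset.univ fun i _ ↦
      (tendsto_measure_symmDiff_preimage_add_right_nhds_zero hs hμs).comp
        ((continuous_apply i).tendsto 0)
  filter_upwards [hsum.eventually_lt_const hpos] with w hw
  obtain ⟨z, hzs, hz⟩ := nonempty_inter_iInter_of_sum_measure_sdiff_lt (μ := μ)
    (t := fun i ↦ (· + w i) ⁻¹' s) <| (Finset.sum_le_sum fun i _ ↦
      measure_mono (subset_union_right.trans_eq (symmDiff_def _ _).symm)).trans_lt hw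
  exact ⟨z, hzs, mem_iInter.1 hz⟩

theorem eventually_nhds_zero_exists_forall_add_mem [μ.InnerRegularCompactLTTop]
    [IsLocallyFiniteMeasure μ] [SigmaFinite μ] {ι : Type*} [Fintype ι] {s : Set G}
    (hs : MeasurableSet s) (hpos : 0 < μ s) :
    ∀ᶠ w in 𝓝 (0 : ι → G), ∃ z ∈ s, ∀ i, z + w i ∈ s := by
  obtain ⟨t, ht, hts, htpos, httop⟩ := Measure.exists_subset_measure_lt_top hs hpos
  filter_upwards [eventually_nhds_zero_exists_forall_add_mem_of_measure_ne_top
    ht.nullMeasurableSet httop.ne htpos] with w ⟨z, hzt, hzw⟩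
  exact ⟨z, hts hzt, fun i ↦ hts (hzw i)⟩

end AddGroup

end MeasureTheory

/-- Steinhaus-type theorem for finite configurations: if `A ⊆ ℝ^d` has positive
Lebesgue measure and `F = {v 1, …, v k}` is finite, then `A` contains all
sufficiently small scaled translates of `F`; i.e. `(0, ε) ⊆ Δ_F(A)` for some `ε > 0`. -/
theorem finite_configurations_in_positive_measure
    (d k : ℕ) (A : Set (EuclideanSpace ℝ (Fin d)))
    (hA_meas : MeasurableSet A) (hA_pos : 0 < volume A)
    (v : Fin k → EuclideanSpace ℝ (Fin d)) :
    ∃ ε : ℝ, 0 < ε ∧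
      Set.Ioo 0 ε ⊆
        {t : ℝ | ∃ z : EuclideanSpace ℝ (Fin d), ∀ i : Fin k, t • v i + z ∈ A} := by
  have hscale : Tendsto (fun t : ℝ ↦ fun i ↦ t • v i) (𝓝 0) (𝓝 0) :=
    (continuous_pi fun i ↦ continuous_id.smul continuous_const).tendsto' 0 0 (by ext; simp)
  have hsmall : ∀ᶠ t in 𝓝[>] (0 : ℝ), ∃ z ∈ A, ∀ i, z + t • v i ∈ A :=
    (hscale.eventually (eventually_nhds_zero_exists_forall_add_mem hA_meas hA_pos)).filter_mono
      nhdsWithin_le_nhds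
  obtain ⟨ε, hε, hIoo⟩ := mem_nhdsGT_iff_exists_Ioo_subset.1 hsmall
  refine ⟨ε, hε, fun t ht ↦ ?_⟩
  obtain ⟨z, -, hz⟩ := hIoo ht
  exact ⟨z, fun i ↦ by rw [add_comm]; exact hz i⟩
end
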